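/- Let B be an n × m real matrix smoothly depending on a parameter, with B^T B invertible, and let P = B(B^T B)^{−1}B^T be the orthogonal projection onto the column space of B. Then the derivative of P with respect to the parameter equals (I − P) Ḃ (B^T B)^{−1} B^T + B (B^T B)^{−1} Ḃ^T (I − P), where Ḃ is the derivative of B. -/

import Mathlib

/-!
With `G = BᵀB`, the product rule gives `Ṗ = Ḃ G⁻¹ Bᵀ + B (G⁻¹)˙ Bᵀ + B G⁻¹ Ḃᵀ`, and differentiating
`G G⁻¹ = 1` gives `(G⁻¹)˙ = -G⁻¹ (ḂᵀB + BᵀḂ) G⁻¹`; that `G⁻¹` is differentiable at all follows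
from the adjugate formula for the inverse. Substituting and expanding `1 - P = 1 - B G⁻¹ Bᵀ`
turns the claim into a noncommutative ring identity.
-/

open Matrix Filter Topology

namespace Matrix

variable {𝕜 : Type*} [NontriviallyNormedField 𝕜] {l m n : Type*}

-- Matrices carry no global norm, so derivatives of matrix-valued functions are taken entrywise.
def HasEntrywiseDerivAt (A : 𝕜 → Matrix m n 𝕜) (A' : Matrix m n 𝕜) (t : 𝕜) : Prop :=
  ∀ i j, HasDerivAt (fun s => A s i j) (A' i j) t

theorem hasEntrywiseDerivAt_const (A : Matrix m n 𝕜) (t : 𝕜) :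
    HasEntrywiseDerivAt (fun _ => A) 0 t :=
  fun i j => hasDerivAt_const t (A i j)

namespace HasEntrywiseDerivAt

variable {A : 𝕜 → Matrix l m 𝕜} {A' : Matrix l m 𝕜} {t : 𝕜}

theorem unique {A'' : Matrix l m 𝕜} (h₁ : HasEntrywiseDerivAt A A' t)
    (h₂ : HasEntrywiseDerivAt A A'' t) : A' = A'' :=
  ext fun i j => (h₁ i j).unique (h₂ i j)

theorem congr_of_eventuallyEq {B : 𝕜 → Matrix l m 𝕜} (hA : HasEntrywiseDerivAt A A' t)
    (h : B =ᶠ[𝓝 t] A) : HasEntrywiseDerivAt B A' t :=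
  fun i j => (hA i j).congr_of_eventuallyEq (h.mono fun _ hs => congr_fun₂ hs i j)

theorem transpose (hA : HasEntrywiseDerivAt A A' t) :
    HasEntrywiseDerivAt (fun s => (A s)ᵀ) A'ᵀ t :=
  fun i j => hA j i

theorem mul [Fintype m] {B : 𝕜 → Matrix m n 𝕜} {B' : Matrix m n 𝕜}
    (hA : HasEntrywiseDerivAt A A' t) (hB : HasEntrywiseDerivAt B B' t) :
    HasEntrywiseDerivAt (fun s => A s * B s) (A' * B t + A t * B') t := by
  intro i j
  simp only [mul_apply, add_apply, ← Finset.sum_add_distrib]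
  exact HasDerivAt.fun_sum fun k _ => (hA i k).mul (hB k j)

end HasEntrywiseDerivAt

variable [Fintype n] [DecidableEq n] {A : 𝕜 → Matrix n n 𝕜} {t : 𝕜}

theorem differentiableAt_det (hA : ∀ i j, DifferentiableAt 𝕜 (fun s => A s i j) t) :
    DifferentiableAt 𝕜 (fun s => (A s).det) t := by
  simp only [det_apply']
  exact .fun_sum fun σ _ =>
    (differentiableAt_const _).mul (.fun_finsetProd fun k _ => hA (σ k) k)

theorem differentiableAt_inv (hA : ∀ i j, DifferentiableAt 𝕜 (fun s => A s i j) t)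
    (hu : IsUnit (A t)) (i j : n) : DifferentiableAt 𝕜 (fun s => (A s)⁻¹ i j) t := by
  simp only [inv_def, smul_apply, smul_eq_mul, Ring.inverse_eq_inv', adjugate_apply]
  refine ((differentiableAt_det hA).inv ((isUnit_iff_isUnit_det _).mp hu).ne_zero).mul
    (differentiableAt_det fun k l => ?_)
  by_cases hk : k = j
  · simp [updateRow_apply, hk]
  · simpa [updateRow_apply, hk] using hA k l

theorem HasEntrywiseDerivAt.inv {A' : Matrix n n 𝕜} (hA : HasEntrywiseDerivAt A A' t)
    (hu : IsUnit (A t)) :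
    HasEntrywiseDerivAt (fun s => (A s)⁻¹) (-((A t)⁻¹ * A' * (A t)⁻¹)) t := by
  have hdiff i j : DifferentiableAt 𝕜 (fun s => A s i j) t := (hA i j).differentiableAt
  set D : Matrix n n 𝕜 := of fun i j => deriv (fun s => (A s)⁻¹ i j) t
  have hD : HasEntrywiseDerivAt (fun s => (A s)⁻¹) D t :=
    fun i j => (differentiableAt_inv hdiff hu i j).hasDerivAt
  have hdet : IsUnit (A t).det := (isUnit_iff_isUnit_det _).mp hu
  have hdet_nhds : ∀ᶠ s in 𝓝 t, IsUnit (A s).det :=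
    ((differentiableAt_det hdiff).continuousAt.eventually_ne hdet.ne_zero).mono
      fun _ hs => hs.isUnit
  have hprod : A' * (A t)⁻¹ + A t * D = 0 :=
    (hA.mul hD).unique <| (hasEntrywiseDerivAt_const 1 t).congr_of_eventuallyEq <|
      hdet_nhds.mono fun s hs => mul_nonsing_inv _ hs
  have hD_eq : D = (A t)⁻¹ * (A t * D) := by
    rw [← Matrix.mul_assoc, nonsing_inv_mul _ hdet, Matrix.one_mul]
  rw [hD_eq, eq_neg_of_add_eq_zero_right hprod] at hD
  simpa [Matrix.mul_assoc] using hD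

end Matrix

/-- Derivative of the projection matrix `P = B(BᵀB)⁻¹Bᵀ`: if `B` depends
differentiably (entrywise) on a real parameter with derivative `Ḃ` and `BᵀB` is
invertible on the domain, then
`∂P = (I - P) Ḃ (BᵀB)⁻¹ Bᵀ + B (BᵀB)⁻¹ Ḃᵀ (I - P)`. -/
theorem stmt_10 (n m : ℕ) (B : ℝ → Matrix (Fin n) (Fin m) ℝ)
    (B' : Matrix (Fin n) (Fin m) ℝ) (t₀ : ℝ)
    (hB : ∀ i j, HasDerivAt (fun t => B t i j) (B' i j) t₀)
    (hinv : ∀ t : ℝ, IsUnit ((B t)ᵀ * B t))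
    (P : ℝ → Matrix (Fin n) (Fin n) ℝ)
    (hP : ∀ t, P t = B t * ((B t)ᵀ * B t)⁻¹ * (B t)ᵀ) :
    ∀ i j, HasDerivAt (fun t => P t i j)
      ((((1 - P t₀) * B' * ((B t₀)ᵀ * B t₀)⁻¹ * (B t₀)ᵀ +
          B t₀ * ((B t₀)ᵀ * B t₀)⁻¹ * B'ᵀ * (1 - P t₀) :
            Matrix (Fin n) (Fin n) ℝ)) i j) t₀ := by
  have hB : HasEntrywiseDerivAt B B' t₀ := hB
  have hGram := (hB.transpose.mul hB).inv (hinv t₀)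
  have hP' := ((hB.mul hGram).mul hB.transpose).congr_of_eventuallyEq (.of_forall hP)
  show HasEntrywiseDerivAt P _ t₀
  convert hP' using 1
  rw [hP t₀]
  simp only [Matrix.mul_add, Matrix.add_mul, Matrix.mul_sub, Matrix.sub_mul,
    Matrix.one_mul, Matrix.mul_one, Matrix.neg_mul, Matrix.mul_neg, Matrix.mul_assoc]
  abel
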